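/- In the quality linkage model with N agents and action profile a, assume that for each agent i the partial derivative ∂/∂s_i E[θ̄ | S = s] exists for every s; then ∂/∂s_i E[θ̄ | S = s] > 0 for every agent i and every s ∈ ℝ^N. In the circumstance linkage model, assume ∂/∂s_i E[ε̄ | S = s] exists for every s; then ∂/∂s_i E[ε̄ | S = s] > 0 for every agent i and every s ∈ ℝ^N. -/

import Mathlib

open MeasureTheory Real Filter

/-- Convolution of two densities on ℝ. -/
noncomputable def conv (f g : ℝ → ℝ) (x : ℝ) : ℝ := ∫ t, f t * g (x - t)

/-- A probability density on ℝ that is strictly positive, `C¹` with bounded derivative,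
and strictly log-concave. -/
def NiceDensity (f : ℝ → ℝ) : Prop :=
  (∀ x, 0 < f x) ∧ (∫ x, f x = 1) ∧ ContDiff ℝ 1 f ∧
    (∃ M, ∀ x, |deriv f x| ≤ M) ∧
    StrictConcaveOn ℝ Set.univ (fun x => Real.log (f x))

/-- Quality linkage model: joint weight of `(θ̄, θ⊥ᵢ)` together with the likelihood of the
outcome profile `s` at action profile `a` (outcomes `Sⱼ = θ̄ + θ⊥ⱼ + aⱼ + εⱼ`). -/
noncomputable def qWeight (fb fp fe : ℝ → ℝ) {N : ℕ} (a : Fin N → ℝ) (i : Fin N)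
    (s : Fin N → ℝ) (b t : ℝ) : ℝ :=
  fb b * fp t * fe (s i - a i - b - t) *
    ∏ j ∈ Finset.univ.erase i, conv fp fe (s j - a j - b)

/-- Quality linkage model: Bayes-rule posterior mean `E[θᵢ | S = s]` of agent `i`'s type
`θᵢ = θ̄ + θ⊥ᵢ`, conjectured action profile `a`. -/
noncomputable def qPostMean (fb fp fe : ℝ → ℝ) {N : ℕ} (a : Fin N → ℝ) (i : Fin N)
    (s : Fin N → ℝ) : ℝ :=
  (∫ b, ∫ t, (b + t) * qWeight fb fp fe a i s b t) /
    (∫ b, ∫ t, qWeight fb fp fe a i s b t)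

/-- Circumstance linkage model: joint weight of `(ε̄, θᵢ)` together with the likelihood of
the outcome profile `s` at action profile `a` (outcomes `Sⱼ = θⱼ + aⱼ + ε̄ + ε⊥ⱼ`). -/
noncomputable def cWeight (ft fb fp : ℝ → ℝ) {N : ℕ} (a : Fin N → ℝ) (i : Fin N)
    (s : Fin N → ℝ) (e t : ℝ) : ℝ :=
  fb e * ft t * fp (s i - a i - t - e) *
    ∏ j ∈ Finset.univ.erase i, conv ft fp (s j - a j - e)

/-- Circumstance linkage model: Bayes-rule posterior mean `E[θᵢ | S = s]`. -/
noncomputable def cPostMean (ft fb fp : ℝ → ℝ) {N : ℕ} (a : Fin N → ℝ) (i : Fin N)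
    (s : Fin N → ℝ) : ℝ :=
  (∫ e, ∫ t, t * cWeight ft fb fp a i s e t) /
    (∫ e, ∫ t, cWeight ft fb fp a i s e t)

/-- Quality linkage model: density of the outcome profile `S` at action profile `a`. -/
noncomputable def qDensity (fb fp fe : ℝ → ℝ) {N : ℕ} (a : Fin N → ℝ)
    (s : Fin N → ℝ) : ℝ :=
  ∫ b, fb b * ∏ j, conv fp fe (s j - a j - b)

/-- Circumstance linkage model: density of the outcome profile `S` at action profile `a`. -/
noncomputable def cDensity (ft fb fp : ℝ → ℝ) {N : ℕ} (a : Fin N → ℝ)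
    (s : Fin N → ℝ) : ℝ :=
  ∫ e, fb e * ∏ j, conv ft fp (s j - a j - e)

/-- Quality linkage model: agent `i1`'s expected value of the principal's posterior-mean
forecast of his type when the principal conjectures actions `α` and agent `i1` actually
deviates by `Δ`. -/
noncomputable def qVal (fb fp fe : ℝ → ℝ) {N : ℕ} (i1 : Fin N) (α : Fin N → ℝ)
    (Δ : ℝ) : ℝ :=
  ∫ s : Fin N → ℝ,
    qPostMean fb fp fe α i1 (Function.update s i1 (s i1 + Δ)) * qDensity fb fp fe α s

/-- Circumstance linkage model: agent `i1`'s expected value of the principal's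
posterior-mean forecast of his type when the principal conjectures actions `α` and agent
`i1` actually deviates by `Δ`. -/
noncomputable def cVal (ft fb fp : ℝ → ℝ) {N : ℕ} (i1 : Fin N) (α : Fin N → ℝ)
    (Δ : ℝ) : ℝ :=
  ∫ s : Fin N → ℝ,
    cPostMean ft fb fp α i1 (Function.update s i1 (s i1 + Δ)) * cDensity ft fb fp α s

/-- Marginal value of effort in the quality linkage model with population size `N + 1`
(agent 1 is coordinate `0`; the value of distortion does not depend on the conjectured
action profile, so the zero profile is used). -/
noncomputable def MVQ (fb fp fe : ℝ → ℝ) (N : ℕ) : ℝ :=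
  deriv (fun Δ => qVal fb fp fe (0 : Fin (N + 1)) (fun _ => 0) Δ) 0

/-- Marginal value of effort in the circumstance linkage model with population size
`N + 1`. -/
noncomputable def MVC (ft fb fp : ℝ → ℝ) (N : ℕ) : ℝ :=
  deriv (fun Δ => cVal ft fb fp (0 : Fin (N + 1)) (fun _ => 0) Δ) 0

/-- Upper Dini derivative `D⁺f(x) = limsup_{h ↓ 0} (f (x + h) − f x) / h`. -/
noncomputable def diniUpper (f : ℝ → ℝ) (x : ℝ) : ℝ :=
  Filter.limsup (fun h => (f (x + h) - f x) / h) (nhdsWithin 0 (Set.Ioi 0))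

/-- Quality linkage model: Bayes-rule posterior mean `E[θ̄ | S = s]` of the common type
component. -/
noncomputable def qBarMean (fb fp fe : ℝ → ℝ) {N : ℕ} (a : Fin N → ℝ)
    (s : Fin N → ℝ) : ℝ :=
  (∫ b, b * (fb b * ∏ j, conv fp fe (s j - a j - b))) /
    (∫ b, fb b * ∏ j, conv fp fe (s j - a j - b))

/-- Circumstance linkage model: Bayes-rule posterior mean `E[ε̄ | S = s]` of the common
noise component. -/
noncomputable def cBarMean (ft fb fp : ℝ → ℝ) {N : ℕ} (a : Fin N → ℝ)
    (s : Fin N → ℝ) : ℝ :=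
  (∫ e, e * (fb e * ∏ j, conv ft fp (s j - a j - e))) /
    (∫ e, fb e * ∏ j, conv ft fp (s j - a j - e))

/-!
Both posterior means are of the form `E[b | x = b + ε]`: the prior weight of the common
component `b` is its density times the likelihoods of the other agents' outcomes, and the noise
density of agent `i`'s outcome is a convolution `g` of two strictly log-concave densities.
Strict log-concavity is used in the strict PF₂ form `g x * g (y + h) < g (x + h) * g y`
(`x < y`, `0 < h`), which is inherited by convolutions (symmetrize the double integral) and makes
`g' / g` strictly decreasing. By the quotient rule, the derivative of the posterior mean has
numerator `∬ b w(b) w(u) (g'(x - b) g(x - u) - g(x - b) g'(x - u))`, and symmetrizing in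
`(b, u)` turns its integrand into `(u - b) w(b) w(u) (g'(x - u) g(x - b) - g'(x - b) g(x - u))`,
which is positive off the diagonal. Log-concavity of the prior gives it exponential tails, hence
a first moment, so all of these integrals converge.
-/

open Set
open scoped NNReal

theorem integral_mul_integral_sub_pos {φ₁ φ₂ φ₃ φ₄ : ℝ → ℝ} (h₁ : Integrable φ₁)
    (h₂ : Integrable φ₂) (h₃ : Integrable φ₃) (h₄ : Integrable φ₄)
    (hdiag : ∀ b, φ₁ b * φ₂ b = φ₃ b * φ₄ b)
    (hlt : ∀ b u, b < u → 0 < φ₁ b * φ₂ u - φ₃ b * φ₄ u + (φ₁ u * φ₂ b - φ₃ u * φ₄ b)) :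
    0 < (∫ x, φ₁ x) * (∫ x, φ₂ x) - (∫ x, φ₃ x) * (∫ x, φ₄ x) := by
  set F : ℝ × ℝ → ℝ := fun p => φ₁ p.1 * φ₂ p.2 - φ₃ p.1 * φ₄ p.2
  have hF : Integrable F (volume.prod volume) := (h₁.mul_prod h₂).sub (h₃.mul_prod h₄)
  have hsymm : ∀ b u, b ≠ u → 0 < F (b, u) + F (u, b) := by
    intro b u hbu
    rcases hbu.lt_or_gt with hbu | hub
    · exact hlt b u hbu
    · rw [add_comm]; exact hlt u b hub
  have hpos : 0 < ∫ p, (F p + F p.swap) ∂(volume.prod volume) := by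
    refine (integral_pos_iff_support_of_nonneg (fun p => ?_) (hF.add hF.swap)).mpr ?_
    · rcases eq_or_ne p.1 p.2 with h | h
      · simp [F, h, hdiag]
      · exact (hsymm p.1 p.2 h).le
    · have hbox : Ioo (0 : ℝ) 1 ×ˢ Ioo 2 3 ⊆ Function.support fun p => F p + F p.swap :=
        fun p hp => (hsymm p.1 p.2 (by linarith [hp.1.2, hp.2.1])).ne'
      refine lt_of_lt_of_le ?_ (measure_mono hbox)
      simp [Measure.prod_prod]
      norm_num
  rw [integral_add hF (hF.swap : Integrable (fun p => F p.swap) _), integral_prod_swap F] at hpos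
  rw [← integral_prod_mul, ← integral_prod_mul, ← integral_sub (h₁.mul_prod h₂) (h₃.mul_prod h₄)]
  linarith

section Convolution

variable {f g g' : ℝ → ℝ} {C M : ℝ}

theorem measurable_deriv_of_hasDerivAt (hg : ∀ z, HasDerivAt g (g' z) z) : Measurable g' := by
  rw [show g' = deriv g from funext fun z => (hg z).deriv.symm]
  exact measurable_deriv g

theorem integrable_mul_comp_sub (hf : Integrable f) (hg : Measurable g) (hC : ∀ z, |g z| ≤ C)
    (x : ℝ) : Integrable fun t => f t * g (x - t) :=
  hf.mul_bdd (hg.comp (measurable_const.sub measurable_id)).aestronglyMeasurable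
    (ae_of_all _ fun t => hC (x - t))

theorem abs_conv_le (hf : ∀ x, 0 ≤ f x) (hf_int : Integrable f) (hf_one : ∫ x, f x = 1)
    (hC : ∀ z, |g z| ≤ C) (x : ℝ) : |conv f g x| ≤ C :=
  calc |conv f g x| ≤ ∫ t, f t * C := by
        rw [conv, ← Real.norm_eq_abs]
        refine norm_integral_le_of_norm_le (hf_int.mul_const C) (ae_of_all _ fun t => ?_)
        rw [norm_mul, Real.norm_of_nonneg (hf t)]
        exact mul_le_mul_of_nonneg_left (hC _) (hf t)
    _ = C := by rw [integral_mul_const, hf_one, one_mul]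

theorem hasDerivAt_integral_mul_comp_sub (hf : Integrable f) (hg : ∀ z, HasDerivAt g (g' z) z)
    (hC : ∀ z, |g z| ≤ C) (hM : ∀ z, |g' z| ≤ M) (x : ℝ) :
    HasDerivAt (fun x => ∫ t, f t * g (x - t)) (∫ t, f t * g' (x - t)) x := by
  have hg_meas : Measurable g :=
    (continuous_iff_continuousAt.mpr fun z => (hg z).continuousAt).measurable
  refine (hasDerivAt_integral_of_dominated_loc_of_deriv_le (F' := fun y t => f t * g' (y - t))
    (bound := fun t => |f t| * M)
    (Metric.ball_mem_nhds x one_pos)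
    (Eventually.of_forall fun y => (integrable_mul_comp_sub hf hg_meas hC y).1)
    (integrable_mul_comp_sub hf hg_meas hC x)
    (integrable_mul_comp_sub hf (measurable_deriv_of_hasDerivAt hg) hM x).1
    (ae_of_all _ fun t y _ => ?_) (hf.abs.mul_const M)
    (ae_of_all _ fun t y _ => ?_)).2
  · rw [norm_mul, Real.norm_eq_abs]
    exact mul_le_mul_of_nonneg_left (hM _) (abs_nonneg _)
  · simpa using ((hg (y - t)).comp y ((hasDerivAt_id y).sub_const t)).const_mul (f t)

theorem conv_add_eq (f g : ℝ → ℝ) (x h : ℝ) :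
    conv f g (x + h) = ∫ t, f (t + h) * g (x - t) := by
  rw [conv, ← integral_add_right_eq_self _ h]
  simp only [add_sub_add_right_eq_sub]

end Convolution

/-- Strict Pólya frequency of order two: the form of strict log-concavity that survives
convolution. -/
def IsStrictPF2 (f : ℝ → ℝ) : Prop :=
  ∀ ⦃x y h : ℝ⦄, x < y → 0 < h → f x * f (y + h) < f (x + h) * f y

theorem StrictConcaveOn.add_lt_add_shift {c : ℝ → ℝ} (hc : StrictConcaveOn ℝ univ c)
    {x y h : ℝ} (hxy : x < y) (hh : 0 < h) : c x + c (y + h) < c (x + h) + c y := by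
  -- `x + h` and `y` are the two convex combinations of `x` and `y + h` with weights `t, 1 - t`
  set t := (y - x) / (y + h - x)
  have ht : 0 < t := div_pos (by linarith) (by linarith)
  have ht' : 0 < 1 - t := by
    rw [sub_pos, div_lt_one (by linarith)]; linarith
  have hne : x ≠ y + h := by linarith
  have h₁ := hc.2 (mem_univ x) (mem_univ (y + h)) hne ht ht' (by ring)
  have h₂ := hc.2 (mem_univ x) (mem_univ (y + h)) hne ht' ht (by ring)
  have e₁ : t • x + (1 - t) • (y + h) = x + h := by
    simp only [t, smul_eq_mul]; field_simp; ring
  have e₂ : (1 - t) • x + t • (y + h) = y := by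
    simp only [t, smul_eq_mul]; field_simp; ring
  rw [e₁] at h₁
  rw [e₂] at h₂
  simp only [smul_eq_mul] at h₁ h₂
  linarith

theorem isStrictPF2_of_strictConcaveOn_log {f : ℝ → ℝ} (hpos : ∀ x, 0 < f x)
    (hc : StrictConcaveOn ℝ univ fun x => log (f x)) : IsStrictPF2 f := by
  intro x y h hxy hh
  have hx := hpos x; have hy := hpos y; have hxh := hpos (x + h); have hyh := hpos (y + h)
  rw [← log_lt_log_iff (by positivity) (by positivity), log_mul hx.ne' hyh.ne',
    log_mul hxh.ne' hy.ne']
  exact hc.add_lt_add_shift hxy hh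

theorem IsStrictPF2.conv {f g : ℝ → ℝ} {C : ℝ} (hf : IsStrictPF2 f) (hg : IsStrictPF2 g)
    (hf_int : Integrable f) (hg_meas : Measurable g) (hC : ∀ z, |g z| ≤ C) :
    IsStrictPF2 (conv f g) := by
  intro x y h hxy hh
  have hint {φ : ℝ → ℝ} (hφ : Integrable φ) (z : ℝ) : Integrable fun t => φ t * g (z - t) :=
    integrable_mul_comp_sub hφ hg_meas hC z
  have hfh : Integrable fun t => f (t + h) := hf_int.comp_add_right h
  rw [← sub_pos, conv_add_eq, conv_add_eq]
  refine integral_mul_integral_sub_pos (hint hfh x) (hint hf_int y) (hint hf_int x) (hint hfh y)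
    (fun b => by ring) fun b u hbu => ?_
  have hgpair : g (x - u) * g (y - b) < g (x - b) * g (y - u) := by
    simpa [sub_add_sub_cancel'] using hg (by linarith : x - u < y - u) (sub_pos.mpr hbu)
  have hfpair : f b * f (u + h) < f (b + h) * f u := hf hbu hh
  calc (0 : ℝ) < (g (x - b) * g (y - u) - g (x - u) * g (y - b))
        * (f (b + h) * f u - f b * f (u + h)) :=
        mul_pos (sub_pos.mpr hgpair) (sub_pos.mpr hfpair)
    _ = _ := by ring

theorem strictAnti_of_hasDerivAt_of_increment {c c' : ℝ → ℝ}
    (hc : ∀ x, HasDerivAt c (c' x) x) (hinc : ∀ d > 0, StrictAnti fun x => c (x + d) - c x) :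
    StrictAnti c' := by
  have hinc' (d x : ℝ) : HasDerivAt (fun x => c (x + d) - c x) (c' (x + d) - c' x) x :=
    ((hc (x + d)).comp_add_const x d).sub (hc x)
  have hanti (x d : ℝ) (hd : 0 < d) : c' (x + d) ≤ c' x := by
    have := (hinc d hd).antitone.deriv_nonpos (x := x)
    rw [(hinc' d x).deriv] at this
    linarith
  intro p q hpq
  set d := (q - p) / 2
  have hd : 0 < d := by simp only [d]; linarith
  have hq : q = p + d + d := by simp only [d]; ring
  -- the mean value theorem on `[p, p + d]` finds a point where the strict decrease is seen
  obtain ⟨ξ, hξ, hslope⟩ := exists_hasDerivAt_eq_slope (fun x => c (x + d) - c x)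
    (fun x => c' (x + d) - c' x) (lt_add_of_pos_right p hd)
    (HasDerivAt.continuousOn fun x _ => hinc' d x) fun x _ => hinc' d x
  have hξd : c' (ξ + d) < c' ξ := by
    have hneg : (c (p + d + d) - c (p + d) - (c (p + d) - c p)) / (p + d - p) < 0 :=
      div_neg_of_neg_of_pos (sub_neg.mpr (hinc d hd (lt_add_of_pos_right p hd))) (by linarith)
    linarith
  calc c' q = c' (ξ + d + (q - (ξ + d))) := by ring_nf
    _ ≤ c' (ξ + d) := hanti _ _ (by linarith [hξ.2, hq])
    _ < c' ξ := hξd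
    _ = c' (p + (ξ - p)) := by ring_nf
    _ ≤ c' p := hanti _ _ (by linarith [hξ.1])

theorem IsStrictPF2.strictAnti_div {g g' : ℝ → ℝ} (hpf : IsStrictPF2 g) (hpos : ∀ x, 0 < g x)
    (hg : ∀ x, HasDerivAt g (g' x) x) : StrictAnti fun x => g' x / g x := by
  refine strictAnti_of_hasDerivAt_of_increment (c := fun x => log (g x))
    (fun x => (hg x).log (hpos x).ne') fun d hd x y hxy => ?_
  have := log_lt_log (mul_pos (hpos _) (hpos _)) (hpf hxy hd)
  rw [log_mul (hpos _).ne' (hpos _).ne', log_mul (hpos _).ne' (hpos _).ne'] at this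
  linarith

/-- Posterior mean of `b` given the observation `x = b + ε`, for prior weight `w` and noise
density `g`. -/
noncomputable def shiftMean (w g : ℝ → ℝ) (x : ℝ) : ℝ :=
  (∫ b, b * w b * g (x - b)) / ∫ b, w b * g (x - b)

theorem deriv_shiftMean_pos {w g g' : ℝ → ℝ} {C M : ℝ} (hw : ∀ b, 0 < w b)
    (hw_int : Integrable w) (hw_mom : Integrable fun b => b * w b) (hg_pos : ∀ z, 0 < g z)
    (hg : ∀ z, HasDerivAt g (g' z) z) (hC : ∀ z, |g z| ≤ C) (hM : ∀ z, |g' z| ≤ M)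
    (hpf : IsStrictPF2 g) (x : ℝ) : 0 < deriv (shiftMean w g) x := by
  have hg_meas : Measurable g :=
    (continuous_iff_continuousAt.mpr fun z => (hg z).continuousAt).measurable
  have hg'_meas : Measurable g' := measurable_deriv_of_hasDerivAt hg
  have hden_pos : 0 < ∫ b, w b * g (x - b) := by
    refine (integral_pos_iff_support_of_nonneg (fun b => (mul_pos (hw b) (hg_pos _)).le)
      (integrable_mul_comp_sub hw_int hg_meas hC x)).mpr ?_
    rw [Function.support_eq_univ fun b => (mul_pos (hw b) (hg_pos _)).ne']
    simp
  have hnum := hasDerivAt_integral_mul_comp_sub hw_mom hg hC hM x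
  have hden := hasDerivAt_integral_mul_comp_sub hw_int hg hC hM x
  rw [HasDerivAt.deriv (f := shiftMean w g) (hnum.div hden hden_pos.ne')]
  refine div_pos (integral_mul_integral_sub_pos
    (integrable_mul_comp_sub hw_mom hg'_meas hM x) (integrable_mul_comp_sub hw_int hg_meas hC x)
    (integrable_mul_comp_sub hw_mom hg_meas hC x) (integrable_mul_comp_sub hw_int hg'_meas hM x)
    (fun b => by ring) fun b u hbu => ?_) (pow_pos hden_pos 2)
  have hratio : g' (x - b) * g (x - u) < g' (x - u) * g (x - b) :=
    (div_lt_div_iff₀ (hg_pos _) (hg_pos _)).mp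
      (hpf.strictAnti_div hg_pos hg (by linarith : x - u < x - b))
  calc (0 : ℝ) < (u - b) * (w b * w u) * (g' (x - u) * g (x - b) - g' (x - b) * g (x - u)) :=
        mul_pos (mul_pos (sub_pos.mpr hbu) (mul_pos (hw b) (hw u))) (sub_pos.mpr hratio)
    _ = _ := by ring

section LogConcaveMoment

variable {f : ℝ → ℝ}

theorem exists_pos_lt_of_integrable (hpos : ∀ x, 0 < f x) (hint : Integrable f) :
    ∃ b > 0, f b < f 0 := by
  by_contra! hge
  have hconst : IntegrableOn (fun _ => f 0) (Ioi (0 : ℝ)) := by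
    refine hint.integrableOn.mono' aestronglyMeasurable_const ?_
    filter_upwards [self_mem_ae_restrict measurableSet_Ioi] with x hx
    rw [Real.norm_of_nonneg (hpos 0).le]
    exact hge x hx
  simp [integrableOn_const_iff (C := f 0), (hpos 0).ne'] at hconst

theorem integrableOn_Ioi_mul_of_concaveOn_log (hpos : ∀ x, 0 < f x) (hint : Integrable f)
    (hconc : ConcaveOn ℝ univ fun x => log (f x)) :
    IntegrableOn (fun x => x * f x) (Ioi 0) := by
  obtain ⟨b, hb, hlt⟩ := exists_pos_lt_of_integrable hpos hint
  set m := (log (f b) - log (f 0)) / b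
  have hm : 0 < -m := by
    have := div_neg_of_neg_of_pos (sub_neg.mpr (log_lt_log (hpos b) hlt)) hb
    linarith
  -- concavity: beyond `b`, `log f` stays below its secant through `0` and `b`
  have htail : ∀ x, b ≤ x → f x ≤ f b * exp (-m * b) * exp (m * x) := by
    intro x hx
    have hlog : log (f x) ≤ log (f b) + m * (x - b) := by
      rcases hx.eq_or_lt with rfl | hx
      · simp
      have := hconc.slope_anti_adjacent (mem_univ 0) (mem_univ x) hb hx
      rw [sub_zero] at this
      have := (div_le_iff₀ (sub_pos.mpr hx)).mp this
      linarith
    calc f x = exp (log (f x)) := (exp_log (hpos x)).symm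
      _ ≤ exp (log (f b) + m * (x - b)) := exp_le_exp.mpr hlog
      _ = f b * exp (-m * b) * exp (m * x) := by
        rw [mul_assoc, ← exp_add, exp_add, exp_log (hpos b)]; ring_nf
  have hexp : IntegrableOn (fun x => x * exp (m * x)) (Ioi 0) := by
    refine (integrableOn_rpow_mul_exp_neg_mul_rpow (s := 1) (p := 1) (by norm_num) one_pos hm
      ).congr_fun (fun x _ => ?_) measurableSet_Ioi
    simp only [rpow_one, neg_neg]
  refine ((hint.integrableOn.const_mul b).add (hexp.const_mul (f b * exp (-m * b)))).mono'
    (aestronglyMeasurable_id.mul hint.1).restrict ?_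
  filter_upwards [self_mem_ae_restrict measurableSet_Ioi] with x hx
  have hx : 0 < x := hx
  rw [Real.norm_of_nonneg (mul_pos hx (hpos x)).le, Pi.add_apply]
  have hC : 0 ≤ f b * exp (-m * b) := (mul_pos (hpos b) (exp_pos _)).le
  rcases le_total x b with hxb | hbx
  · nlinarith [mul_le_mul_of_nonneg_right hxb (hpos x).le, mul_pos hx (exp_pos (m * x))]
  · have := mul_le_mul_of_nonneg_left (htail x hbx) hx.le
    nlinarith [mul_nonneg hb.le (hpos x).le]

theorem integrable_mul_of_concaveOn_log (hpos : ∀ x, 0 < f x) (hint : Integrable f)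
    (hconc : ConcaveOn ℝ univ fun x => log (f x)) :
    Integrable fun x => x * f x := by
  have hright := integrableOn_Ioi_mul_of_concaveOn_log hpos hint hconc
  have hleft' := integrableOn_Ioi_mul_of_concaveOn_log (f := fun x => f (-x))
    (fun x => hpos (-x)) hint.comp_neg (hconc.comp_linearMap (-LinearMap.id))
  have hleft : IntegrableOn (fun x => x * f x) (Iic 0) := by
    rw [← (Measure.measurePreserving_neg volume).integrableOn_comp_preimage
      (Homeomorph.neg ℝ).measurableEmbedding]
    have hpre : (fun x : ℝ => -x) ⁻¹' Iic 0 = Ici 0 := by ext; simp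
    rw [hpre, integrableOn_Ici_iff_integrableOn_Ioi]
    refine hleft'.neg.congr_fun (fun x _ => ?_) measurableSet_Ioi
    simp
  simpa [← integrableOn_univ] using hleft.union hright

end LogConcaveMoment

theorem sq_le_mul_integral_of_lipschitzWith {f : ℝ → ℝ} {K : ℝ≥0} (hK : 0 < K)
    (hf : LipschitzWith K f) (hnn : ∀ x, 0 ≤ f x) (hint : Integrable f) (x : ℝ) :
    f x ^ 2 ≤ 4 * K * ∫ t, f t := by
  set r := f x / (2 * K)
  have hr : 0 ≤ r := div_nonneg (hnn x) (by positivity)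
  -- on `[x, x + r]` the Lipschitz bound keeps `f` above `f x / 2`
  have hlow : ∀ t ∈ Icc x (x + r), f x / 2 ≤ f t := by
    intro t ht
    have hdist := hf.dist_le_mul t x
    rw [Real.dist_eq, Real.dist_eq, abs_of_nonneg (sub_nonneg.mpr ht.1)] at hdist
    have hKr : (K : ℝ) * r = f x / 2 := by simp only [r]; field_simp
    have := mul_le_mul_of_nonneg_left (sub_le_iff_le_add'.mpr ht.2) K.coe_nonneg
    linarith [neg_abs_le (f t - f x)]
  have hset := setIntegral_ge_of_const_le measurableSet_Icc (by simp) hlow hint.integrableOn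
  rw [Real.volume_real_Icc_of_le (by linarith), add_sub_cancel_left, smul_eq_mul] at hset
  have hle := setIntegral_le_integral (s := Icc x (x + r)) hint (ae_of_all _ hnn)
  have hrK : r * (f x / 2) * (4 * K) = f x ^ 2 := by simp only [r]; field_simp; ring
  nlinarith [mul_le_mul_of_nonneg_right (hset.trans hle) (by positivity : (0 : ℝ) ≤ 4 * K)]

theorem prod_update_sub_sub {N : ℕ} (g : ℝ → ℝ) (s a : Fin N → ℝ) (i : Fin N) (x b : ℝ) :
    ∏ j, g (Function.update s i x j - a j - b) =
      g (x - a i - b) * ∏ j ∈ Finset.univ.erase i, g (s j - a j - b) := by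
  rw [← Finset.mul_prod_erase _ _ (Finset.mem_univ i), Function.update_self]
  congr 1
  exact Finset.prod_congr rfl fun j hj => by rw [Function.update_of_ne (Finset.ne_of_mem_erase hj)]

namespace NiceDensity

variable {f f₁ f₂ f₃ : ℝ → ℝ}

theorem pos (hf : NiceDensity f) (x : ℝ) : 0 < f x := hf.1 x

theorem integral_eq_one (hf : NiceDensity f) : ∫ x, f x = 1 := hf.2.1

theorem integrable (hf : NiceDensity f) : Integrable f := by
  by_contra h
  simpa [integral_undef h] using hf.integral_eq_one

theorem differentiable (hf : NiceDensity f) : Differentiable ℝ f :=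
  hf.2.2.1.differentiable one_ne_zero

theorem exists_abs_deriv_le (hf : NiceDensity f) : ∃ M, ∀ x, |deriv f x| ≤ M := hf.2.2.2.1

theorem strictConcaveOn_log (hf : NiceDensity f) : StrictConcaveOn ℝ univ fun x => log (f x) :=
  hf.2.2.2.2

theorem exists_abs_le (hf : NiceDensity f) : ∃ C, ∀ x, |f x| ≤ C := by
  obtain ⟨M, hM⟩ := hf.exists_abs_deriv_le
  set K := (max M 1).toNNReal
  have hK : 0 < K := by simp [K]
  have hlip : LipschitzWith K f := by
    refine lipschitzWith_of_nnnorm_deriv_le hf.differentiable fun x => ?_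
    rw [← NNReal.coe_le_coe, coe_nnnorm, Real.norm_eq_abs, Real.coe_toNNReal _ (by positivity)]
    exact (hM x).trans (le_max_left _ _)
  refine ⟨√(4 * K), fun x => ?_⟩
  rw [abs_of_pos (hf.pos x), Real.le_sqrt (hf.pos x).le (by positivity)]
  simpa [hf.integral_eq_one] using
    sq_le_mul_integral_of_lipschitzWith hK hlip (fun x => (hf.pos x).le) hf.integrable x

theorem conv_pos (h₂ : NiceDensity f₂) (h₃ : NiceDensity f₃) (x : ℝ) : 0 < conv f₂ f₃ x := by
  obtain ⟨C, hC⟩ := h₃.exists_abs_le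
  have hpos (t : ℝ) : 0 < f₂ t * f₃ (x - t) := mul_pos (h₂.pos t) (h₃.pos _)
  refine (integral_pos_iff_support_of_nonneg (fun t => (hpos t).le)
    (integrable_mul_comp_sub h₂.integrable h₃.differentiable.continuous.measurable hC x)).mpr ?_
  rw [Function.support_eq_univ fun t => (hpos t).ne']
  simp

theorem hasDerivAt_conv (h₂ : NiceDensity f₂) (h₃ : NiceDensity f₃) (x : ℝ) :
    HasDerivAt (conv f₂ f₃) (conv f₂ (deriv f₃) x) x := by
  obtain ⟨C, hC⟩ := h₃.exists_abs_le
  obtain ⟨M, hM⟩ := h₃.exists_abs_deriv_le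
  exact hasDerivAt_integral_mul_comp_sub h₂.integrable
    (fun z => (h₃.differentiable z).hasDerivAt) hC hM x

theorem isStrictPF2_conv (h₂ : NiceDensity f₂) (h₃ : NiceDensity f₃) :
    IsStrictPF2 (conv f₂ f₃) := by
  obtain ⟨C, hC⟩ := h₃.exists_abs_le
  exact (isStrictPF2_of_strictConcaveOn_log h₂.pos h₂.strictConcaveOn_log).conv
    (isStrictPF2_of_strictConcaveOn_log h₃.pos h₃.strictConcaveOn_log) h₂.integrable
    h₃.differentiable.continuous.measurable hC

theorem deriv_commonMean_pos (h₁ : NiceDensity f₁) (h₂ : NiceDensity f₂) (h₃ : NiceDensity f₃)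
    {N : ℕ} (a : Fin N → ℝ) (i : Fin N) (s : Fin N → ℝ) :
    0 < deriv (fun x =>
      (∫ b, b * (f₁ b * ∏ j, conv f₂ f₃ (Function.update s i x j - a j - b))) /
        ∫ b, f₁ b * ∏ j, conv f₂ f₃ (Function.update s i x j - a j - b)) (s i) := by
  obtain ⟨C, hC⟩ := h₃.exists_abs_le
  obtain ⟨M, hM⟩ := h₃.exists_abs_deriv_le
  set g := conv f₂ f₃
  have hg (z : ℝ) : HasDerivAt g (conv f₂ (deriv f₃) z) z := h₂.hasDerivAt_conv h₃ z
  have hg_cont : Continuous g := continuous_iff_continuousAt.mpr fun z => (hg z).continuousAt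
  have hg_bdd (z : ℝ) : |g z| ≤ C :=
    abs_conv_le (fun t => (h₂.pos t).le) h₂.integrable h₂.integral_eq_one hC z
  have hg'_bdd (z : ℝ) : |conv f₂ (deriv f₃) z| ≤ M :=
    abs_conv_le (fun t => (h₂.pos t).le) h₂.integrable h₂.integral_eq_one hM z
  -- likelihood of the other agents' outcomes as a function of the common component
  set P : ℝ → ℝ := fun b => ∏ j ∈ Finset.univ.erase i, g (s j - a j - b)
  have hP_meas : AEStronglyMeasurable P := (by fun_prop : Continuous P).aestronglyMeasurable
  have hP_bdd : ∀ᵐ b, ‖P b‖ ≤ C ^ (Finset.univ.erase i).card := ae_of_all _ fun b => by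
    rw [Real.norm_eq_abs, Finset.abs_prod]
    exact (Finset.prod_le_prod (fun _ _ => abs_nonneg _) fun _ _ => hg_bdd _).trans_eq
      (Finset.prod_const C)
  have hfun : (fun x =>
      (∫ b, b * (f₁ b * ∏ j, g (Function.update s i x j - a j - b))) /
        ∫ b, f₁ b * ∏ j, g (Function.update s i x j - a j - b)) =
      fun x => shiftMean (fun b => f₁ b * P b) g (x - a i) := by
    funext x
    simp only [shiftMean, prod_update_sub_sub]
    congr 1 <;> exact integral_congr_ae (ae_of_all _ fun b => by ring)
  rw [hfun, deriv_comp_sub_const]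
  refine deriv_shiftMean_pos
    (fun b => mul_pos (h₁.pos b) (Finset.prod_pos fun j _ => h₂.conv_pos h₃ _))
    (h₁.integrable.mul_bdd hP_meas hP_bdd) ?_ (h₂.conv_pos h₃) hg hg_bdd hg'_bdd
    (h₂.isStrictPF2_conv h₃) _
  simpa only [mul_assoc] using (integrable_mul_of_concaveOn_log h₁.pos h₁.integrable
    h₁.strictConcaveOn_log.concaveOn).mul_bdd hP_meas hP_bdd

end NiceDensity

theorem common_component_mean_increasing_general {N : ℕ}
    (fθb fθp fε fθ fεb fεp : ℝ → ℝ)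
    (hθb : NiceDensity fθb) (hθp : NiceDensity fθp) (hε : NiceDensity fε)
    (hθ : NiceDensity fθ) (hεb : NiceDensity fεb) (hεp : NiceDensity fεp)
    (a : Fin N → ℝ) :
    ((∀ (i : Fin N) (s : Fin N → ℝ),
        DifferentiableAt ℝ (fun x => qBarMean fθb fθp fε a (Function.update s i x)) (s i)) →
      ∀ (i : Fin N) (s : Fin N → ℝ),
        0 < deriv (fun x => qBarMean fθb fθp fε a (Function.update s i x)) (s i)) ∧
    ((∀ (i : Fin N) (s : Fin N → ℝ),
        DifferentiableAt ℝ (fun x => cBarMean fθ fεb fεp a (Function.update s i x)) (s i)) →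
      ∀ (i : Fin N) (s : Fin N → ℝ),
        0 < deriv (fun x => cBarMean fθ fεb fεp a (Function.update s i x)) (s i)) :=
  ⟨fun _ i s => hθb.deriv_commonMean_pos hθp hε a i s,
    fun _ i s => hεb.deriv_commonMean_pos hθ hεp a i s⟩

/-- Paper's lemma: the posterior expectation of the common component of outcomes is
strictly increasing in every agent's outcome.  In the quality linkage model, whenever
`∂/∂sᵢ E[θ̄ | S = s]` exists it is strictly positive; in the circumstance linkage model,
whenever `∂/∂sᵢ E[ε̄ | S = s]` exists it is strictly positive. -/
theorem common_component_mean_increasing {N : ℕ} (hN : 0 < N)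
    (fθb fθp fε fθ fεb fεp : ℝ → ℝ)
    (hθb : NiceDensity fθb) (hθp : NiceDensity fθp) (hε : NiceDensity fε)
    (hθ : NiceDensity fθ) (hεb : NiceDensity fεb) (hεp : NiceDensity fεp)
    (a : Fin N → ℝ) :
    ((∀ (i : Fin N) (s : Fin N → ℝ),
        DifferentiableAt ℝ (fun x => qBarMean fθb fθp fε a (Function.update s i x)) (s i)) →
      ∀ (i : Fin N) (s : Fin N → ℝ),
        0 < deriv (fun x => qBarMean fθb fθp fε a (Function.update s i x)) (s i)) ∧
    ((∀ (i : Fin N) (s : Fin N → ℝ),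
        DifferentiableAt ℝ (fun x => cBarMean fθ fεb fεp a (Function.update s i x)) (s i)) →
      ∀ (i : Fin N) (s : Fin N → ℝ),
        0 < deriv (fun x => cBarMean fθ fεb fεp a (Function.update s i x)) (s i)) :=
  common_component_mean_increasing_general fθb fθp fε fθ fεb fεp hθb hθp hε hθ hεb hεp a
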